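/- arXiv:2411.05263 — 5 statements merged into one kernel-verified Lean document; each statement's English description precedes it below -/
import Mathlib

section
/- Assume: (a) for all δ > k, r(k,δ) ≤ r̄(k); (b) ∑_{δ=1}^{k} r(k,δ)·p(k+δ) ≤ r̄(k)·∑_{δ=1}^{k} p(k+δ); (c) pn^>(k) ≤ ∑_{δ=1}^{k} r(k,δ)·p(k+δ); (d) for δ > k, pn(k,k+δ) = r(k,δ)·p(k+δ) (since p(k−δ)=0); and (e) r̄(k) < 1. Then (p^>(k) − pn^>(k)) + (p^{>>}(k) − pn^{>>}(k)) ≥ 0. -/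
open Finset

theorem stmt6 (p pn r : ℕ → ℝ) (N k : ℕ) (hk : 1 ≤ k) (hkN : k ≤ N)
    (hp : ∀ n, 0 ≤ p n) (hpn : ∀ n, 0 ≤ pn n) (hr : ∀ n, 0 ≤ r n)
    (ha : ∀ δ, k < δ → r δ ≤ (∑ d ∈ Icc 1 k, r d) / (k : ℝ))
    (hb : ∑ δ ∈ Icc 1 k, r δ * p (k + δ)
            ≤ ((∑ d ∈ Icc 1 k, r d) / (k : ℝ)) * ∑ δ ∈ Icc 1 k, p (k + δ))
    (hc : ∑ δ ∈ Icc 1 k, pn (k + δ) ≤ ∑ δ ∈ Icc 1 k, r δ * p (k + δ))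
    (hd : ∀ δ, k < δ → pn (k + δ) = r δ * p (k + δ))
    (he : (∑ d ∈ Icc 1 k, r d) / (k : ℝ) < 1) :
    0 ≤ (∑ δ ∈ Icc 1 k, p (k + δ) - ∑ δ ∈ Icc 1 k, pn (k + δ))
        + (∑ δ ∈ Icc (k + 1) N, p (k + δ) - ∑ δ ∈ Icc (k + 1) N, pn (k + δ)) := by
  set rb := (∑ d ∈ Icc 1 k, r d) / (k : ℝ) with hrb
  have hS : (0:ℝ) ≤ ∑ δ ∈ Icc 1 k, p (k + δ) :=
    Finset.sum_nonneg fun i _ => hp _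
  have h1 : ∑ δ ∈ Icc 1 k, pn (k + δ) ≤ ∑ δ ∈ Icc 1 k, p (k + δ) := by
    calc ∑ δ ∈ Icc 1 k, pn (k + δ) ≤ rb * ∑ δ ∈ Icc 1 k, p (k + δ) := hc.trans hb
    _ ≤ 1 * ∑ δ ∈ Icc 1 k, p (k + δ) := mul_le_mul_of_nonneg_right he.le hS
    _ = _ := one_mul _
  have h2 : ∑ δ ∈ Icc (k + 1) N, pn (k + δ) ≤ ∑ δ ∈ Icc (k + 1) N, p (k + δ) := by
    apply Finset.sum_le_sum
    intro i hi
    have hki : k < i := by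
      simp only [Finset.mem_Icc] at hi; omega
    rw [hd i hki]
    calc r i * p (k + i) ≤ 1 * p (k + i) :=
      mul_le_mul_of_nonneg_right ((ha i hki).trans he.le) (hp _)
    _ = p (k + i) := one_mul _
  linarith
end

section
/- If NSC(k) holds (i.e., pn(k,k−δ) ≥ r(k,δ)·p(k−δ) for all δ ∈ 1..k, and r(k,δ) is monotonically decreasing in δ) and r(k,k) ≥ 1, then pn(k,i) ≥ p(i) for all i ∈ 0..k−1, and hence pn^<(k) ≥ p^<(k). -/
open Finset

theorem stmt7 (p pn r : ℕ → ℝ) (k : ℕ) (hk : 1 ≤ k)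
    (hp : ∀ n, 0 ≤ p n) (hpn : ∀ n, 0 ≤ pn n) (hr : ∀ n, 0 ≤ r n)
    (hnsc1 : ∀ δ, 1 ≤ δ → δ ≤ k → r δ * p (k - δ) ≤ pn (k - δ))
    (hnsc2 : ∀ δ₁ δ₂, 1 ≤ δ₁ → δ₁ ≤ δ₂ → δ₂ ≤ k → r δ₂ ≤ r δ₁)
    (hrkk : 1 ≤ r k) :
    (∀ i, i < k → p i ≤ pn i) ∧ ∑ i ∈ range k, p i ≤ ∑ i ∈ range k, pn i := by
  have main : ∀ i, i < k → p i ≤ pn i := by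
    intro i hi
    have h1 : 1 ≤ k - i := by omega
    have h2 : k - i ≤ k := by omega
    have hr1 : 1 ≤ r (k - i) := le_trans hrkk (hnsc2 (k - i) k h1 h2 le_rfl)
    have := hnsc1 (k - i) h1 h2
    have hki : k - (k - i) = i := by omega
    rw [hki] at this
    calc p i = 1 * p i := (one_mul _).symm
      _ ≤ r (k - i) * p i := mul_le_mul_of_nonneg_right hr1 (hp i)
      _ ≤ pn i := this
  exact ⟨main, Finset.sum_le_sum fun i hi => main i (mem_range.mp hi)⟩
end

section
/- Define steps_u(k,t) recursively by steps_u(k,t) = 0 for k ≤ t, and steps_u(k,t) = imp_u(k) · (1 + ∑_{i=t+1}^{k−1} p₀·r(k,k−i)·steps_u(i,t)) for k > t, where imp_u(k) = 1/(∑_{i=1}^{k} r(k,k−i)·p_u(i)) with p_u(i) = p₀ for i > t and p_u(i) ≤ p₀ nonnegative otherwise, p₀ > 0. Assume Full NSC(k): r(k₁,δ₁) ≥ r(k₂,δ₂) whenever δ₁ ≤ k₁, δ₁ ≤ δ₂ ≤ k₂ ≤ k, and r(k,δ) > 0 for δ ≤ k. Then steps_u(k,t) ≤ imp_u(k)·(k−t).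 -/
open Finset


private lemma star_aux (f : ℕ → ℝ) (n : ℕ) (hn : 1 ≤ n)
    (hmono : ∀ a b, a ≤ b → b < n → f b ≤ f a)
    (hpos : ∀ a, a < n → 0 < f a) :
    ∑ s ∈ Icc 1 (n-1), f (n - s) * ((s : ℝ) / ∑ δ ∈ range s, f δ) ≤ (n : ℝ) - 1 := by
  have hS : ∀ s, 1 ≤ s → s ≤ n - 1 → 0 < ∑ δ ∈ range s, f δ := by
    intro s h1 h2
    apply Finset.sum_pos
    · intro δ hδ
      rw [mem_range] at hδ
      exact hpos δ (by omega)
    · exact nonempty_range_iff.mpr (by omega)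
  have hSmono : ∀ a b, a ≤ b → b ≤ n - 1 →
      (∑ δ ∈ range a, f δ) ≤ ∑ δ ∈ range b, f δ := by
    intro a b hab hb
    apply Finset.sum_le_sum_of_subset_of_nonneg (range_subset_range.mpr hab)
    intro δ hδ _
    rw [mem_range] at hδ
    exact (hpos δ (by omega)).le
  -- rewrite each summand difference as a sum
  have hrw : ∀ s ∈ Icc 1 (n-1),
      (1 : ℝ) - f (n - s) * ((s : ℝ) / ∑ δ ∈ range s, f δ)
        = ∑ δ ∈ range s, (f δ - f (n - s)) / (∑ δ' ∈ range s, f δ') := by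
    intro s hs
    rw [mem_Icc] at hs
    have h0 := hS s hs.1 hs.2
    rw [← Finset.sum_div, Finset.sum_sub_distrib, Finset.sum_const, card_range,
      nsmul_eq_mul]
    field_simp
  have key : (0:ℝ) ≤ ∑ s ∈ Icc 1 (n-1),
      ((1 : ℝ) - f (n - s) * ((s : ℝ) / ∑ δ ∈ range s, f δ)) := by
    rw [Finset.sum_congr rfl hrw, Finset.sum_sigma']
    set P : Finset ((_ : ℕ) × ℕ) := (Icc 1 (n-1)).sigma (fun s => range s) with hP
    set term : (Σ _ : ℕ, ℕ) → ℝ :=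
      fun p => (f p.2 - f (n - p.1)) / (∑ δ' ∈ range p.1, f δ') with hterm
    show (0:ℝ) ≤ ∑ p ∈ P, term p
    have hmemP : ∀ p : (Σ _ : ℕ, ℕ), p ∈ P ↔ (1 ≤ p.1 ∧ p.1 ≤ n - 1 ∧ p.2 < p.1) := by
      intro p
      rw [hP, mem_sigma, mem_Icc, mem_range]
      tauto
    set neg := P.filter (fun p => n - p.1 < p.2) with hneg
    set pos := P.filter (fun p => ¬ (n - p.1 < p.2)) with hpos'
    have hsplit : ∑ p ∈ P, term p = ∑ p ∈ neg, term p + ∑ p ∈ pos, term p :=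
      (Finset.sum_filter_add_sum_filter_not P _ term).symm
    set ι : (Σ _ : ℕ, ℕ) → (Σ _ : ℕ, ℕ) := fun p => ⟨n - p.2, n - p.1⟩ with hι
    have hmemneg : ∀ p ∈ neg, 1 ≤ p.1 ∧ p.1 ≤ n - 1 ∧ p.2 < p.1 ∧ n - p.1 < p.2 := by
      intro p hp
      rw [hneg, mem_filter] at hp
      have := (hmemP p).mp hp.1
      exact ⟨this.1, this.2.1, this.2.2, hp.2⟩
    have himg : ∀ p ∈ neg, ι p ∈ pos := by
      intro p hp
      obtain ⟨h1, h2, h3, h4⟩ := hmemneg p hp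
      rw [hpos', mem_filter, hmemP, hι]
      simp only
      omega
    have hinj : Set.InjOn ι neg := by
      intro p hp q hq hpq
      rw [Finset.mem_coe] at hp hq
      obtain ⟨hp1, hp2, hp3, hp4⟩ := hmemneg p hp
      obtain ⟨hq1, hq2, hq3, hq4⟩ := hmemneg q hq
      rw [hι, Sigma.mk.inj_iff, heq_iff_eq] at hpq
      obtain ⟨e1, e2⟩ := hpq
      obtain ⟨ps, pd⟩ := p
      obtain ⟨qs, qd⟩ := q
      simp only at *
      have : ps = qs := by omega
      have : pd = qd := by omega
      subst this; subst ‹ps = qs›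
      rfl
    have hposnn : ∀ p ∈ pos, 0 ≤ term p := by
      intro p hp
      rw [hpos', mem_filter] at hp
      obtain ⟨hpP, hcond⟩ := hp
      rw [hmemP] at hpP
      obtain ⟨h1, h2, h3⟩ := hpP
      apply div_nonneg
      · have : f (n - p.1) ≤ f p.2 := hmono p.2 (n - p.1) (by omega) (by omega)
        linarith
      · exact (hS p.1 h1 h2).le
    have hpair : ∀ p ∈ neg, 0 ≤ term p + term (ι p) := by
      intro p hp
      obtain ⟨h1, h2, h3, h4⟩ := hmemneg p hp
      have hterm2 : term (ι p) = (f (n - p.1) - f p.2) / (∑ δ' ∈ range (n - p.2), f δ') := by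
        rw [hterm, hι]
        have : n - (n - p.2) = p.2 := by omega
        simp only [this]
      have hterm1 : term p = (f p.2 - f (n - p.1)) / (∑ δ' ∈ range p.1, f δ') := rfl
      rw [hterm2, hterm1]
      have hfle : f p.2 ≤ f (n - p.1) := hmono (n - p.1) p.2 (by omega) (by omega)
      have hSle : (∑ δ' ∈ range (n - p.2), f δ') ≤ ∑ δ' ∈ range p.1, f δ' :=
        hSmono _ _ (by omega) h2
      have hS1 : 0 < ∑ δ' ∈ range (n - p.2), f δ' := hS _ (by omega) (by omega)
      have hS2 : 0 < ∑ δ' ∈ range p.1, f δ' := hS _ h1 h2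
      have h5 : (f (n - p.1) - f p.2) / (∑ δ' ∈ range p.1, f δ')
          ≤ (f (n - p.1) - f p.2) / (∑ δ' ∈ range (n - p.2), f δ') :=
        div_le_div_of_nonneg_left (by linarith) hS1 hSle
      have h6 : (f p.2 - f (n - p.1)) / (∑ δ' ∈ range p.1, f δ')
          = -((f (n - p.1) - f p.2) / (∑ δ' ∈ range p.1, f δ')) := by ring
      rw [h6]
      linarith
    -- assemble
    have h7 : ∑ p ∈ neg.image ι, term p ≤ ∑ p ∈ pos, term p := by
      apply Finset.sum_le_sum_of_subset_of_nonneg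
      · intro p hp
        rw [Finset.mem_image] at hp
        obtain ⟨q, hq, rfl⟩ := hp
        exact himg q hq
      · intro p hp _
        exact hposnn p hp
    have h8 : ∑ p ∈ neg.image ι, term p = ∑ p ∈ neg, term (ι p) :=
      Finset.sum_image (fun p hp q hq h => hinj hp hq h)
    have h9 : (0:ℝ) ≤ ∑ p ∈ neg, (term p + term (ι p)) :=
      Finset.sum_nonneg hpair
    rw [Finset.sum_add_distrib] at h9
    rw [hsplit]
    linarith [h7, h8.symm.le, h9]
  have hcard : ∑ s ∈ Icc 1 (n-1), (1:ℝ) = (n:ℝ) - 1 := by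
    rw [Finset.sum_const, Nat.card_Icc, nsmul_eq_mul, mul_one]
    have : n - 1 + 1 - 1 = n - 1 := by omega
    rw [this, Nat.cast_sub hn, Nat.cast_one]
  rw [Finset.sum_sub_distrib] at key
  linarith [key, hcard]

theorem stmt13 (r : ℕ → ℕ → ℝ) (pu : ℕ → ℝ) (p₀ : ℝ) (t k : ℕ)
    (stepsu : ℕ → ℝ)
    (ht : t < k) (hp₀ : 0 < p₀)
    (hpu : ∀ i, 0 ≤ pu i)
    (hpu_hi : ∀ i, t < i → pu i = p₀)
    (hpu_lo : ∀ i, i ≤ t → pu i ≤ p₀)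
    (hfull : ∀ k₁ δ₁ k₂ δ₂, δ₁ ≤ k₁ → δ₁ ≤ δ₂ → δ₂ ≤ k₂ → k₂ ≤ k →
      r k₂ δ₂ ≤ r k₁ δ₁)
    (hrpos : ∀ δ, δ ≤ k → 0 < r k δ)
    (hbase : ∀ m, m ≤ t → stepsu m = 0)
    (hrec : ∀ m, t < m → m ≤ k →
      stepsu m = (1 / ∑ i ∈ Icc 1 m, r m (m - i) * pu i) *
        (1 + ∑ i ∈ Icc (t + 1) (m - 1), p₀ * r m (m - i) * stepsu i)) :
    stepsu k ≤ (1 / ∑ i ∈ Icc 1 k, r k (k - i) * pu i) * ((k : ℝ) - t) := by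
  have hfmono : ∀ a b, a ≤ b → b ≤ k → r k b ≤ r k a :=
    fun a b hab hbk => hfull k a k b (hab.trans hbk) hab hbk le_rfl
  have hfeq : ∀ m δ, δ ≤ m → m ≤ k → r m δ = r k δ := fun m δ hδ hm =>
    le_antisymm (hfull k δ m δ (hδ.trans hm) le_rfl hδ hm)
      (hfull m δ k δ hδ le_rfl (hδ.trans hm) le_rfl)
  have hSpos : ∀ s, 1 ≤ s → s ≤ k → 0 < ∑ δ ∈ range s, r k δ := by
    intro s h1 h2
    apply Finset.sum_pos
    · intro δ hδ
      rw [mem_range] at hδ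
      exact hrpos δ (by omega)
    · exact nonempty_range_iff.mpr (by omega)
  -- lower bound on the denominator
  have hDlb : ∀ m, t < m → m ≤ k →
      p₀ * (∑ δ ∈ range (m - t), r k δ) ≤ ∑ j ∈ Icc 1 m, r m (m - j) * pu j := by
    intro m hm hmk
    have h1 : ∑ j ∈ Icc (t+1) m, r m (m - j) * pu j ≤ ∑ j ∈ Icc 1 m, r m (m - j) * pu j := by
      apply Finset.sum_le_sum_of_subset_of_nonneg
      · apply Icc_subset_Icc_left; omega
      · intro j hj _
        rw [mem_Icc] at hj
        have : r m (m - j) = r k (m - j) := hfeq m (m - j) (by omega) hmk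
        rw [this]
        exact mul_nonneg (hrpos (m - j) (by omega)).le (hpu j)
    have h2 : ∑ j ∈ Icc (t+1) m, r m (m - j) * pu j
        = p₀ * ∑ δ ∈ range (m - t), r k δ := by
      rw [Finset.mul_sum]
      apply Finset.sum_nbij' (fun j => m - j) (fun δ => m - δ)
      · intro j hj; rw [mem_Icc] at hj; rw [mem_range]; omega
      · intro δ hδ; rw [mem_range] at hδ; rw [mem_Icc]; omega
      · intro j hj; rw [mem_Icc] at hj; omega
      · intro δ hδ; rw [mem_range] at hδ; omega
      · intro j hj; rw [mem_Icc] at hj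
        rw [hfeq m (m - j) (by omega) hmk, hpu_hi j (by omega)]
        ring
    rw [← h2]; exact h1
  -- main strong induction
  have key : ∀ m, m ≤ k → 0 ≤ stepsu m ∧ (t < m →
      1 + (∑ i ∈ Icc (t + 1) (m - 1), p₀ * r m (m - i) * stepsu i) ≤ (m : ℝ) - t) := by
    intro m
    induction m using Nat.strong_induction_on with
    | _ m ih =>
      intro hmk
      by_cases hm : t < m
      · -- bounds on stepsu i for i in the sum, from the induction hypothesis
        have hstep_le : ∀ i, t < i → i < m →
            stepsu i ≤ ((i : ℝ) - t) / (p₀ * ∑ δ ∈ range (i - t), r k δ) := by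
          intro i hti him
          have hik : i ≤ k := by omega
          have hrec_i := hrec i hti hik
          have hNi := (ih i him hik).2 hti
          have hNi_nonneg : (0:ℝ) ≤ 1 + ∑ j ∈ Icc (t + 1) (i - 1), p₀ * r i (i - j) * stepsu j := by
            have : (0:ℝ) ≤ ∑ j ∈ Icc (t + 1) (i - 1), p₀ * r i (i - j) * stepsu j := by
              apply Finset.sum_nonneg
              intro j hj
              rw [mem_Icc] at hj
              have hji : j < i := by omega
              have : r i (i - j) = r k (i - j) := hfeq i (i - j) (by omega) hik
              rw [this]
              exact mul_nonneg (mul_nonneg hp₀.le (hrpos (i - j) (by omega)).le)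
                (ih j (by omega) (by omega)).1
            linarith
          have hSipos : 0 < ∑ δ ∈ range (i - t), r k δ := hSpos (i - t) (by omega) (by omega)
          have hDipos : 0 < ∑ j ∈ Icc 1 i, r i (i - j) * pu j :=
            lt_of_lt_of_le (mul_pos hp₀ hSipos) (hDlb i hti hik)
          rw [hrec_i]
          calc (1 / ∑ j ∈ Icc 1 i, r i (i - j) * pu j) *
                (1 + ∑ j ∈ Icc (t + 1) (i - 1), p₀ * r i (i - j) * stepsu j)
              ≤ (1 / ∑ j ∈ Icc 1 i, r i (i - j) * pu j) * ((i:ℝ) - t) := by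
                apply mul_le_mul_of_nonneg_left hNi
                positivity
            _ ≤ ((i : ℝ) - t) / (p₀ * ∑ δ ∈ range (i - t), r k δ) := by
                rw [one_div, inv_mul_eq_div]
                apply div_le_div_of_nonneg_left _ (by positivity) (hDlb i hti hik)
                have : (t:ℝ) < i := by exact_mod_cast hti
                linarith
        constructor
        · -- nonnegativity of stepsu m
          rw [hrec m hm hmk]
          have hSm : 0 < ∑ δ ∈ range (m - t), r k δ := hSpos (m - t) (by omega) (by omega)
          have hDpos : 0 < ∑ j ∈ Icc 1 m, r m (m - j) * pu j :=
            lt_of_lt_of_le (mul_pos hp₀ hSm) (hDlb m hm hmk)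
          apply mul_nonneg (by positivity)
          have : (0:ℝ) ≤ ∑ i ∈ Icc (t + 1) (m - 1), p₀ * r m (m - i) * stepsu i := by
            apply Finset.sum_nonneg
            intro i hi
            rw [mem_Icc] at hi
            have : r m (m - i) = r k (m - i) := hfeq m (m - i) (by omega) hmk
            rw [this]
            exact mul_nonneg (mul_nonneg hp₀.le (hrpos (m - i) (by omega)).le)
              (ih i (by omega) (by omega)).1
          linarith
        · intro _
          -- bound the sum
          set n := m - t with hn
          have hsum_le : ∑ i ∈ Icc (t + 1) (m - 1), p₀ * r m (m - i) * stepsu i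
              ≤ ∑ s ∈ Icc 1 (n - 1), r k (n - s) * ((s : ℝ) / ∑ δ ∈ range s, r k δ) := by
            have step1 : ∑ i ∈ Icc (t + 1) (m - 1), p₀ * r m (m - i) * stepsu i
                ≤ ∑ i ∈ Icc (t + 1) (m - 1),
                    r k (m - i) * (((i : ℝ) - t) / ∑ δ ∈ range (i - t), r k δ) := by
              apply Finset.sum_le_sum
              intro i hi
              rw [mem_Icc] at hi
              have hti : t < i := by omega
              have him : i < m := by omega
              have hik : i ≤ k := by omega
              have hr_eq : r m (m - i) = r k (m - i) := hfeq m (m - i) (by omega) hmk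
              have hrpos' : 0 < r k (m - i) := hrpos (m - i) (by omega)
              have hSipos : 0 < ∑ δ ∈ range (i - t), r k δ := hSpos (i - t) (by omega) (by omega)
              rw [hr_eq]
              have h1 : p₀ * r k (m - i) * stepsu i
                  ≤ p₀ * r k (m - i) * (((i : ℝ) - t) / (p₀ * ∑ δ ∈ range (i - t), r k δ)) := by
                apply mul_le_mul_of_nonneg_left (hstep_le i hti him) (by positivity)
              calc p₀ * r k (m - i) * stepsu i
                  ≤ p₀ * r k (m - i) * (((i : ℝ) - t) / (p₀ * ∑ δ ∈ range (i - t), r k δ)) := h1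
                _ = r k (m - i) * (((i : ℝ) - t) / ∑ δ ∈ range (i - t), r k δ) := by
                    field_simp
            have step2 : ∑ i ∈ Icc (t + 1) (m - 1),
                r k (m - i) * (((i : ℝ) - t) / ∑ δ ∈ range (i - t), r k δ)
                = ∑ s ∈ Icc 1 (n - 1), r k (n - s) * ((s : ℝ) / ∑ δ ∈ range s, r k δ) := by
              apply Finset.sum_nbij' (fun i => i - t) (fun s => s + t)
              · intro i hi; rw [mem_Icc] at hi; rw [mem_Icc]; omega
              · intro s hs; rw [mem_Icc] at hs; rw [mem_Icc]; omega
              · intro i hi; rw [mem_Icc] at hi; omega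
              · intro s hs; rw [mem_Icc] at hs; omega
              · intro i hi
                rw [mem_Icc] at hi
                have e1 : n - (i - t) = m - i := by omega
                have e2 : ((i : ℝ) - t) = ((i - t : ℕ) : ℝ) := by
                  rw [Nat.cast_sub (by omega)]
                rw [e1, e2]
            exact step1.trans_eq step2
          have hstar : ∑ s ∈ Icc 1 (n - 1), r k (n - s) * ((s : ℝ) / ∑ δ ∈ range s, r k δ)
              ≤ (n : ℝ) - 1 := by
            apply star_aux (r k) n (by omega)
            · intro a b hab hb
              exact hfmono a b hab (by omega)
            · intro a ha
              exact hrpos a (by omega)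
          have hcast : ((n : ℝ)) = (m : ℝ) - t := by
            rw [hn, Nat.cast_sub (by omega)]
          linarith [hsum_le.trans hstar]
      · -- m ≤ t
        constructor
        · rw [hbase m (by omega)]
        · intro h; omega
  -- conclude
  have hk := (key k le_rfl).2 ht
  have hDpos : 0 < ∑ j ∈ Icc 1 k, r k (k - j) * pu j :=
    lt_of_lt_of_le (by
      have := hSpos (k - t) (by omega) (by omega)
      positivity) (hDlb k ht le_rfl)
  rw [hrec k ht le_rfl]
  apply mul_le_mul_of_nonneg_left hk
  positivity
end

section
/- Assume: steps(k,t) and steps_u(k,t) both satisfy ∑_{i=0}^{k−1} Q_i·(F(k)−F(i)) = 1 for their respective nonnegative weights (Q_i = pn(k,i) for steps, Q_i = r(k,k−i)·p₀ for steps_u), the neighbourhood is positively biased: pn(k,i) ≥ r(k,k−i)·p₀ for all i < k, steps(i,t) ≤ steps_u(i,t) for all i < k (induction hypothesis), steps_u(k,t) ≥ steps_u(i,t) for all i < k, and steps, steps_u agree at the base case steps(t+1,t) = steps_u(t+1,t). Then steps(k,t) ≤ steps_u(k,t). -/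
open Finset

theorem stmt16 (steps stepsu pn r : ℕ → ℝ) (p₀ : ℝ) (t k : ℕ)
    (htk : t + 1 ≤ k)
    (hpn_nonneg : ∀ i, 0 ≤ pn i) (hw_nonneg : ∀ i, i < k → 0 ≤ r (k - i) * p₀)
    (hid1 : ∑ i ∈ range k, pn i * (steps k - steps i) = 1)
    (hid2 : ∑ i ∈ range k, (r (k - i) * p₀) * (stepsu k - stepsu i) = 1)
    (hbias : ∀ i, i < k → r (k - i) * p₀ ≤ pn i)
    (hih : ∀ i, i < k → steps i ≤ stepsu i)
    (hmono : ∀ i, i < k → stepsu i ≤ stepsu k)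
    (hbase : steps (t + 1) = stepsu (t + 1)) :
    steps k ≤ stepsu k := by
  by_contra h
  push_neg at h
  -- key facts for each i < k
  have hdiff : ∀ i, i < k → stepsu k - stepsu i < steps k - steps i := by
    intro i hi
    have := hih i hi
    linarith
  have hdnn : ∀ i, i < k → (0:ℝ) ≤ stepsu k - stepsu i := by
    intro i hi; have := hmono i hi; linarith
  -- step 1: sum with weights w of (steps k - steps i) ≤ 1
  have h1 : ∑ i ∈ range k, (r (k - i) * p₀) * (steps k - steps i) ≤ 1 := by
    rw [← hid1]
    apply Finset.sum_le_sum
    intro i hi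
    have hi' := Finset.mem_range.mp hi
    have hx : 0 ≤ steps k - steps i :=
      le_trans (hdnn i hi') (le_of_lt (hdiff i hi'))
    exact mul_le_mul_of_nonneg_right (hbias i hi') hx
  -- step 2: there is i with positive weight
  have hpos : ∃ i ∈ range k, (0:ℝ) < (r (k - i) * p₀) * (stepsu k - stepsu i) := by
    by_contra hc
    push_neg at hc
    have : ∑ i ∈ range k, (r (k - i) * p₀) * (stepsu k - stepsu i) ≤ 0 :=
      Finset.sum_nonpos hc
    linarith
  obtain ⟨j, hjmem, hjpos⟩ := hpos
  have hj := Finset.mem_range.mp hjmem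
  have hwj : 0 < r (k - j) * p₀ := by
    rcases lt_or_eq_of_le (hw_nonneg j hj) with h' | h'
    · exact h'
    · exfalso; rw [← h'] at hjpos; simp at hjpos
  -- step 3: strict inequality between sums
  have h2 : ∑ i ∈ range k, (r (k - i) * p₀) * (stepsu k - stepsu i)
      < ∑ i ∈ range k, (r (k - i) * p₀) * (steps k - steps i) := by
    apply Finset.sum_lt_sum
    · intro i hi
      have hi' := Finset.mem_range.mp hi
      exact mul_le_mul_of_nonneg_left (le_of_lt (hdiff i hi')) (hw_nonneg i hi')
    · exact ⟨j, hjmem, mul_lt_mul_of_pos_left (hdiff j hj) hwj⟩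
  rw [hid2] at h2
  linarith
end

section
/- Suppose Full NSC(k) holds (r(k₁,δ) ≥ r(k₂,δ) for k₁ ≤ k₂ ≤ k and r decreasing in δ; pn(k₁,i) ≥ r(k₁,k₁−i)·p(i) for i < k₁ ≤ k) and ∑_{i=0}^{t} r(k,k−i)·p(i) ≥ p^<(t+1). Then for every k₁ with t < k₁ ≤ k, ∑_{i=0}^{t} pn(k₁,i) ≥ p^<(t+1); i.e., at every cost level encountered during local descent below k, the probability of directly reaching a cost ≤ t is at least the blind-search success probability. -/
open Finset

theorem stmt18 (p : ℕ → ℝ) (pn r : ℕ → ℕ → ℝ) (t k : ℕ) (ht : t < k)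
    (hp : ∀ i, 0 ≤ p i)
    (hrlevel : ∀ k₁ k₂ δ, k₁ ≤ k₂ → k₂ ≤ k → r k₂ δ ≤ r k₁ δ)
    (hrdelta : ∀ k', k' ≤ k → ∀ δ₁ δ₂, δ₁ ≤ δ₂ → r k' δ₂ ≤ r k' δ₁)
    (hbias : ∀ k₁, k₁ ≤ k → ∀ i, i < k₁ → r k₁ (k₁ - i) * p i ≤ pn k₁ i)
    (hcond : ∑ i ∈ range (t + 1), p i ≤ ∑ i ∈ range (t + 1), r k (k - i) * p i) :
    ∀ k₁, t < k₁ → k₁ ≤ k →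
      ∑ i ∈ range (t + 1), p i ≤ ∑ i ∈ range (t + 1), pn k₁ i := by
  intro k₁ htk₁ hk₁k
  calc ∑ i ∈ range (t + 1), p i ≤ ∑ i ∈ range (t + 1), r k (k - i) * p i := hcond
    _ ≤ ∑ i ∈ range (t + 1), r k₁ (k₁ - i) * p i := by
        apply Finset.sum_le_sum
        intro i hi
        have : r k (k - i) ≤ r k₁ (k₁ - i) := by
          calc r k (k - i) ≤ r k₁ (k - i) := hrlevel k₁ k _ hk₁k le_rfl
            _ ≤ r k₁ (k₁ - i) := hrdelta k₁ hk₁k _ _ (Nat.sub_le_sub_right hk₁k i)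
        exact mul_le_mul_of_nonneg_right this (hp i)
    _ ≤ ∑ i ∈ range (t + 1), pn k₁ i := by
        apply Finset.sum_le_sum
        intro i hi
        exact hbias k₁ hk₁k i (lt_of_lt_of_le (Finset.mem_range.mp hi) htk₁)
end
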